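/- arXiv:2211.06515 — 2 statements merged into one kernel-verified Lean document; each statement's English description precedes it below -/
import Mathlib

section
/- Let g: R^n → R and g_c: R^{n_c} → R be twice differentiable, let P: R^{n_c} → R^n, Π: R^n → R^{n_c}, R: R^n → R^{n_c} be linear maps satisfying R H_g(x) P = H_{g_c}(Π x), where H_g, H_{g_c} denote Hessians. Suppose x_c is an exact minimizer (critical point) of the FAS coarse functional ĝ_c(y) = g_c(y) - y^T (∇g_c(Πx) - R∇g(x)), and define x_new = x + P(x_c - Πx). Then, up to first order terms in the Taylor expansion (i.e., discarding terms of order ≥ 2 in x_c - Πx), R ∇g(x_new) = 0. -/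
open Matrix

theorem Matrix.mulVec_add_mulVec_mulVec {k n o m α : Type*} [NonUnitalSemiring α]
    [Fintype n] [Fintype o] [Fintype m] (R : Matrix k n α) (H : Matrix n o α) (P : Matrix o m α)
    (g : n → α) (d : m → α) :
    R *ᵥ (g + H *ᵥ (P *ᵥ d)) = R *ᵥ g + (R * H * P) *ᵥ d := by
  rw [mulVec_add, mulVec_mulVec, mulVec_mulVec, Matrix.mul_assoc]

theorem eq_neg_of_sub_sub_eq_zero_of_eq_add {G : Type*} [AddCommGroup G] {a b h r : G}
    (hsub : a - (b - r) = 0) (ha : a = b + h) : h = -r := by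
  rw [ha, add_sub_sub_cancel] at hsub
  exact eq_neg_of_add_eq_zero_left hsub

/-- FAS first-order consistency: if `x_c` is a critical point of the τ-corrected coarse
functional, the Hessian compatibility `R H_g(x) P = H_{g_c}(Πx)` holds, and the Taylor
expansions are truncated at first order (modelled as exact first-order expansion
hypotheses), then `R ∇g(x_new) = 0` for `x_new = x + P(x_c - Πx)`. -/
theorem fas_first_order_consistency
    (n nc : ℕ)
    (gradg : (Fin n → ℝ) → (Fin n → ℝ))
    (gradgc : (Fin nc → ℝ) → (Fin nc → ℝ))
    (Hg : (Fin n → ℝ) → Matrix (Fin n) (Fin n) ℝ)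
    (Hgc : (Fin nc → ℝ) → Matrix (Fin nc) (Fin nc) ℝ)
    (P : Matrix (Fin n) (Fin nc) ℝ)
    (Pi : Matrix (Fin nc) (Fin n) ℝ)
    (R : Matrix (Fin nc) (Fin n) ℝ)
    (x : Fin n → ℝ) (xc : Fin nc → ℝ)
    (hHess : R * Hg x * P = Hgc (Pi.mulVec x))
    -- x_c is a critical point of ĝ_c(y) = g_c(y) - yᵀ(∇g_c(Πx) - R∇g(x))
    (hcrit : gradgc xc - (gradgc (Pi.mulVec x) - R.mulVec (gradg x)) = 0)
    -- first-order Taylor expansion of ∇g_c about Πx (second-order terms discarded)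
    (hTaylorCoarse : gradgc xc =
      gradgc (Pi.mulVec x) + (Hgc (Pi.mulVec x)).mulVec (xc - Pi.mulVec x))
    -- first-order Taylor expansion of ∇g about x (second-order terms discarded)
    (hTaylorFine : gradg (x + P.mulVec (xc - Pi.mulVec x)) =
      gradg x + (Hg x).mulVec (P.mulVec (xc - Pi.mulVec x))) :
    R.mulVec (gradg (x + P.mulVec (xc - Pi.mulVec x))) = 0 := by
  -- The τ-correction turns the coarse critical-point equation into: the linearised coarse
  -- step cancels the restricted fine gradient.
  have hstep : Hgc (Pi *ᵥ x) *ᵥ (xc - Pi *ᵥ x) = -(R *ᵥ gradg x) :=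
    eq_neg_of_sub_sub_eq_zero_of_eq_add hcrit hTaylorCoarse
  rw [hTaylorFine, mulVec_add_mulVec_mulVec, hHess, hstep, add_neg_cancel]
end

section
/- Let P_k, π_k satisfy π_k P_k = I for all layers, and define the coarse network parameters by W_k^c = π_{k+1} W_k P_k and b_k^c = π_{k+1} b_k (i.e., x_c = Πx). Suppose the fine parameters lie in the range of the prolongation, i.e., x = P(x̂) for some coarse tuple x̂ (so W_k = P_{k+1} Ŵ_k π_k and b_k = P_{k+1} b̂_k). Then the coarse network obtained by restriction recovers x̂ exactly: W_k^c = Ŵ_k and b_k^c = b̂_k; moreover, if additionally P_k φ(z) = φ(P_k z) for the activation φ and all relevant z, then the fine network output satisfies DNN(x; P_0 y_c) = P_{n_L+1} DNN_c(x̂; y_c) for every coarse input y_c. -/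
/-
Because `π_k P_k = I`, a fine layer applied to a prolonged state `P_k y` computes
`P_{k+1} Ŵ_k π_k P_k y + P_{k+1} b̂_k = P_{k+1} (Ŵ_k y + b̂_k)`; as `φ` commutes with `P_{k+1}`,
the fine state stays the prolongation of the coarse one at every depth.
-/

open Matrix

/-- Feedforward network map: `dnnOut d W b φ L y` applies `L` layers
`y ↦ φ.(W_k y + b_k)` (componentwise activation `φ`) to the input `y`. -/
def dnnOut (d : ℕ → ℕ) (W : ∀ k : ℕ, Matrix (Fin (d (k + 1))) (Fin (d k)) ℝ)
    (b : ∀ k : ℕ, Fin (d (k + 1)) → ℝ) (φ : ℝ → ℝ) :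
    (L : ℕ) → (Fin (d 0) → ℝ) → (Fin (d L) → ℝ)
  | 0, y => y
  | (L + 1), y => fun i => φ (((W L).mulVec (dnnOut d W b φ L y) + b L) i)

section Prolongation

variable {R : Type*} [Semiring R] {l l' m n : Type*}

theorem restrict_mul_prolong [Fintype l] [Fintype l'] [Fintype m] [Fintype n] [DecidableEq m]
    [DecidableEq n] {pi : Matrix m l R} {P : Matrix l m R} {pi' : Matrix n l' R}
    {P' : Matrix l' n R} (h : pi * P = 1) (h' : pi' * P' = 1) (A : Matrix n m R) :
    pi' * (P' * A * pi) * P = A := by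
  rw [Matrix.mul_assoc, Matrix.mul_assoc, h, Matrix.mul_one, ← Matrix.mul_assoc, h',
    Matrix.one_mul]

theorem restrict_mulVec_prolong [Fintype l] [Fintype m] [DecidableEq m] {pi : Matrix m l R}
    {P : Matrix l m R} (h : pi * P = 1) (v : m → R) : pi *ᵥ (P *ᵥ v) = v := by
  rw [mulVec_mulVec, h, one_mulVec]

theorem prolong_affine_mulVec_prolong [Fintype l] [Fintype m] [Fintype n] [DecidableEq m]
    {pi : Matrix m l R} {P : Matrix l m R} (h : pi * P = 1) (P' : Matrix l' n R)
    (A : Matrix n m R) (c : n → R) (y : m → R) :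
    (P' * A * pi) *ᵥ (P *ᵥ y) + P' *ᵥ c = P' *ᵥ (A *ᵥ y + c) := by
  rw [mulVec_mulVec, Matrix.mul_assoc, h, Matrix.mul_one, ← mulVec_mulVec, mulVec_add]

end Prolongation

theorem dnnOut_succ (d : ℕ → ℕ) (W : ∀ k : ℕ, Matrix (Fin (d (k + 1))) (Fin (d k)) ℝ)
    (b : ∀ k : ℕ, Fin (d (k + 1)) → ℝ) (φ : ℝ → ℝ) (L : ℕ) (y : Fin (d 0) → ℝ) :
    dnnOut d W b φ (L + 1) y = fun i => φ ((W L *ᵥ dnnOut d W b φ L y + b L) i) :=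
  rfl

theorem dnnOut_prolong {n ncd : ℕ → ℕ}
    {P : ∀ k : ℕ, Matrix (Fin (n k)) (Fin (ncd k)) ℝ}
    {pi : ∀ k : ℕ, Matrix (Fin (ncd k)) (Fin (n k)) ℝ}
    (hproj : ∀ k : ℕ, pi k * P k = 1)
    (What : ∀ k : ℕ, Matrix (Fin (ncd (k + 1))) (Fin (ncd k)) ℝ)
    (bhat : ∀ k : ℕ, Fin (ncd (k + 1)) → ℝ) {φ : ℝ → ℝ}
    (hφ : ∀ (k : ℕ) (z : Fin (ncd k) → ℝ),
        (P k).mulVec (fun i => φ (z i)) = fun i => φ ((P k).mulVec z i))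
    (y : Fin (ncd 0) → ℝ) (L : ℕ) :
    dnnOut n (fun k => P (k + 1) * What k * pi k) (fun k => P (k + 1) *ᵥ bhat k) φ L (P 0 *ᵥ y) =
      P L *ᵥ dnnOut ncd What bhat φ L y := by
  induction L with
  | zero => rfl
  | succ L ih =>
    rw [dnnOut_succ, dnnOut_succ, hφ, ih, prolong_affine_mulVec_prolong (hproj L)]

/-- If `π_k P_k = I` and the fine parameters lie in the range of the prolongation
(`W_k = P_{k+1} Ŵ_k π_k`, `b_k = P_{k+1} b̂_k`), then restriction recovers the coarse
parameters exactly (`π_{k+1} W_k P_k = Ŵ_k`, `π_{k+1} b_k = b̂_k`); moreover if the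
activation `φ` commutes with each `P_k`, the fine network output satisfies
`DNN(x; P₀ y_c) = P_{n_L+1} DNN_c(x̂; y_c)` for every coarse input `y_c`. -/
theorem restriction_recovers_coarse_and_output_consistency
    (nL : ℕ) (n ncd : ℕ → ℕ)
    (P : ∀ k : ℕ, Matrix (Fin (n k)) (Fin (ncd k)) ℝ)
    (pi : ∀ k : ℕ, Matrix (Fin (ncd k)) (Fin (n k)) ℝ)
    (hproj : ∀ k : ℕ, pi k * P k = 1)
    (What : ∀ k : ℕ, Matrix (Fin (ncd (k + 1))) (Fin (ncd k)) ℝ)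
    (bhat : ∀ k : ℕ, Fin (ncd (k + 1)) → ℝ)
    (W : ∀ k : ℕ, Matrix (Fin (n (k + 1))) (Fin (n k)) ℝ)
    (b : ∀ k : ℕ, Fin (n (k + 1)) → ℝ)
    -- the fine parameters lie in the range of the prolongation: x = P(x̂)
    (hW : ∀ k, W k = P (k + 1) * What k * pi k)
    (hb : ∀ k, b k = (P (k + 1)).mulVec (bhat k))
    (φ : ℝ → ℝ) :
    -- restriction recovers x̂ exactly
    (∀ k, pi (k + 1) * W k * P k = What k) ∧
    (∀ k, (pi (k + 1)).mulVec (b k) = bhat k) ∧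
    -- if φ commutes with each P_k, the fine output is the prolonged coarse output
    ((∀ (k : ℕ) (z : Fin (ncd k) → ℝ),
        (P k).mulVec (fun i => φ (z i)) = fun i => φ ((P k).mulVec z i)) →
      ∀ yc : Fin (ncd 0) → ℝ,
        dnnOut n W b φ (nL + 1) ((P 0).mulVec yc) =
          (P (nL + 1)).mulVec (dnnOut ncd What bhat φ (nL + 1) yc)) := by
  obtain rfl : W = fun k => P (k + 1) * What k * pi k := funext hW
  obtain rfl : b = fun k => P (k + 1) *ᵥ bhat k := funext hb
  exact ⟨fun k => restrict_mul_prolong (hproj k) (hproj (k + 1)) (What k),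
    fun k => restrict_mulVec_prolong (hproj (k + 1)) (bhat k),
    fun hφ yc => dnnOut_prolong hproj What bhat hφ yc (nL + 1)⟩
end
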